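/- Let 𝒢 be a temporal graph with n vertices and lifetime T such that each snapshot has at least one edge, let ω ≥ 0, and fix an integer k ≥ 2. Then the temporal k-modularity satisfies q*_{k,ω}(𝒢) ≥ (1 − 1/k)·q*_ω(𝒢) + n·ω·(T−1)/(2·k·μ_ω(𝒢)). -/

import Mathlib

/-!
Colour the parts of an optimal partition independently and uniformly at random with `k`
colours and merge the parts of equal colour. Writing each snapshot term as a sum of pair
weights `[u ~ v] (A_uv - d_u d_v / 2m)`, whose total is zero, two vertices in distinct parts
end up together with probability `1/k`, so every snapshot term is multiplied by `1 - 1/k` in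
expectation, while the loyalty becomes `(1 - 1/k) L + n (T - 1)/k`. Some colouring is at least
as good as the average.
-/

open Finset
open scoped Classical

namespace TemporalModularity

noncomputable section

variable {V : Type*} [Fintype V] {P : Type*}

/-- Twice the number of edges of `G` with both endpoints in `A`
(the sum over ordered pairs of vertices of `A` of the adjacency indicator). -/
def twoE (G : SimpleGraph V) (A : Finset V) : ℝ :=
  ∑ u ∈ A, ∑ v ∈ A, if G.Adj u v then (1 : ℝ) else 0

/-- The degree of `v` in `G`, as a real number. -/
def deg (G : SimpleGraph V) (v : V) : ℝ :=
  ∑ u : V, if G.Adj v u then (1 : ℝ) else 0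

/-- The number of edges of `G` (half the sum of the degrees), as a real number. -/
def numEdges (G : SimpleGraph V) : ℝ := (∑ v : V, deg G v) / 2

/-- The volume of `A` in `G`: the sum of the degrees of the vertices of `A`. -/
def vol (G : SimpleGraph V) (A : Finset V) : ℝ := ∑ v ∈ A, deg G v

/-- The part with label `p` of the vertex partition induced by the labelling `π`. -/
def part (π : V → P) (p : P) : Finset V := univ.filter fun v => π v = p

/-- `Σ_{A ∈ 𝒜} (2 e_G(A) − vol_G(A)² / (2m))`, where `𝒜` is the partition of the
vertices induced by the labelling `π` (empty parts contribute zero). -/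
def snapTerm (G : SimpleGraph V) (π : V → P) : ℝ :=
  ∑ p ∈ univ.image π,
    (twoE G (part π p) - vol G (part π p) ^ 2 / (2 * numEdges G))

/-- The static modularity `q(G,𝒜) = Σ_{A ∈ 𝒜} (e(A)/m − vol(A)²/(4m²))` of the
partition induced by the labelling `π`. -/
def staticQ (G : SimpleGraph V) (π : V → P) : ℝ :=
  ∑ p ∈ univ.image π,
    (twoE G (part π p) / (2 * numEdges G) -
      vol G (part π p) ^ 2 / (4 * numEdges G ^ 2))

/-- The maximum static modularity `q*(G)` over all vertex partitions (every partition
of `V` is induced by some labelling `V → V`). -/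
def staticQStar (G : SimpleGraph V) : ℝ := ⨆ π : V → V, staticQ G π

/-- The loyalty contribution `L(𝒜)` of the temporal partition `π` with lifetime `T`. -/
def loyalty (T : ℕ) (π : V → ℕ → P) : ℝ :=
  ∑ v : V, ∑ t ∈ Icc 1 (T - 1), if π v t = π v (t + 1) then (1 : ℝ) else 0

/-- The per-time loyalty `L(𝒜,t)` of the temporal partition `π`. -/
def loyaltyAt (π : V → ℕ → P) (t : ℕ) : ℝ :=
  ∑ v : V, if π v t = π v (t + 1) then (1 : ℝ) else 0

/-- The normalisation factor `μ_ω(𝒢) = ω n (T−1)/2 + Σ_t m_t`. -/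
def mu (G : ℕ → SimpleGraph V) (T : ℕ) (ω : ℝ) : ℝ :=
  ω * (Fintype.card V) * ((T : ℝ) - 1) / 2 + ∑ t ∈ Icc 1 T, numEdges (G t)

/-- The non-normalised temporal modularity of the restriction of the temporal graph
`G` to the time interval `[a,b]`, for the partition `π`. -/
def qTildeI (G : ℕ → SimpleGraph V) (a b : ℕ) (ω : ℝ) (π : V → ℕ → P) : ℝ :=
  (∑ t ∈ Icc a b, snapTerm (G t) fun v => π v t) +
    ω * ∑ v : V, ∑ t ∈ Icc a (b - 1), if π v t = π v (t + 1) then (1 : ℝ) else 0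

/-- The non-normalised temporal modularity `q̃_ω(𝒢,𝒜)` of the partition `π` of the
temporal graph `G` with lifetime `T`. -/
def qTilde (G : ℕ → SimpleGraph V) (T : ℕ) (ω : ℝ) (π : V → ℕ → P) : ℝ :=
  qTildeI G 1 T ω π

/-- The temporal modularity `q_ω(𝒢,𝒜)` of the partition `π` of the temporal graph `G`
with lifetime `T`. -/
def qTemp (G : ℕ → SimpleGraph V) (T : ℕ) (ω : ℝ) (π : V → ℕ → P) : ℝ :=
  qTilde G T ω π / (2 * mu G T ω)

/-- The temporal modularity `q*_ω(𝒢)`: the maximum of `q_ω(𝒢,𝒜)` over all partitions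
(every partition of `V × [T]` is induced by some labelling into `ℕ`). -/
def qTempStar (G : ℕ → SimpleGraph V) (T : ℕ) (ω : ℝ) : ℝ :=
  ⨆ π : V → ℕ → ℕ, qTemp G T ω π

/-- The temporal `k`-modularity `q*_{k,ω}(𝒢)`: the maximum of `q_ω(𝒢,𝒜)` over all
partitions into at most `k` parts. -/
def qTempStarK (G : ℕ → SimpleGraph V) (T : ℕ) (ω : ℝ) (k : ℕ) : ℝ :=
  ⨆ π : V → ℕ → Fin k, qTemp G T ω π

/-- The maximum non-normalised temporal modularity of the restriction of `G` to the
time interval `[a,b]`, over all partitions. -/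
def qTildeStarI (G : ℕ → SimpleGraph V) (a b : ℕ) (ω : ℝ) : ℝ :=
  ⨆ π : V → ℕ → ℕ, qTildeI G a b ω π

/-- The non-normalised temporal modularity `q̃*_ω(𝒢)` of the temporal graph `G` with
lifetime `T`. -/
def qTildeStar (G : ℕ → SimpleGraph V) (T : ℕ) (ω : ℝ) : ℝ := qTildeStarI G 1 T ω

/-- The maximum non-normalised temporal modularity of the restriction of `G` to `[a,b]`
over partitions into at most `c` parts. -/
def qTildeStarKI (G : ℕ → SimpleGraph V) (a b : ℕ) (ω : ℝ) (c : ℕ) : ℝ :=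
  ⨆ π : V → ℕ → Fin c, qTildeI G a b ω π

/-- The non-normalised temporal `c`-modularity `q̃*_{c,ω}(𝒢)`. -/
def qTildeStarK (G : ℕ → SimpleGraph V) (T : ℕ) (ω : ℝ) (c : ℕ) : ℝ :=
  qTildeStarKI G 1 T ω c

end


section

variable {V : Type*} [Fintype V] {P Q : Type*}

noncomputable def modularityWeight (G : SimpleGraph V) (u v : V) : ℝ :=
  (if G.Adj u v then 1 else 0) - deg G u * deg G v / (2 * numEdges G)

lemma deg_nonneg (G : SimpleGraph V) (v : V) : 0 ≤ deg G v :=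
  sum_nonneg fun _ _ => by positivity

lemma numEdges_nonneg (G : SimpleGraph V) : 0 ≤ numEdges G :=
  div_nonneg (sum_nonneg fun v _ => deg_nonneg G v) zero_le_two

lemma twoE_univ (G : SimpleGraph V) : twoE G univ = 2 * numEdges G := by
  rw [twoE, numEdges]; simp only [deg]; ring

lemma vol_univ (G : SimpleGraph V) : vol G univ = 2 * numEdges G := by
  rw [vol, numEdges]; ring

lemma twoE_sub_vol_sq_div_eq_sum (G : SimpleGraph V) (A : Finset V) :
    twoE G A - vol G A ^ 2 / (2 * numEdges G) =
      ∑ u ∈ A, ∑ v ∈ A, modularityWeight G u v := by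
  simp only [twoE, vol, sq, sum_mul_sum, sum_div, ← sum_sub_distrib, modularityWeight]

lemma sum_modularityWeight (G : SimpleGraph V) : ∑ u, ∑ v, modularityWeight G u v = 0 := by
  -- `x * x / x = x` holds also at `x = 0`, so edgeless graphs need no separate case.
  rw [← twoE_sub_vol_sq_div_eq_sum, twoE_univ, vol_univ, sq, mul_self_div_self, sub_self]

lemma snapTerm_eq_sum_modularityWeight (G : SimpleGraph V) (σ : V → P) :
    snapTerm G σ = ∑ u, ∑ v, if σ u = σ v then modularityWeight G u v else 0 := by
  have hpart (p : P) : twoE G (part σ p) - vol G (part σ p) ^ 2 / (2 * numEdges G) =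
      ∑ u ∈ part σ p, ∑ v ∈ part σ (σ u), modularityWeight G u v := by
    rw [twoE_sub_vol_sq_div_eq_sum]
    refine sum_congr rfl fun u hu => ?_
    rw [part, mem_filter] at hu
    rw [hu.2]
  calc snapTerm G σ
      = ∑ p ∈ univ.image σ, ∑ u ∈ part σ p, ∑ v ∈ part σ (σ u), modularityWeight G u v :=
        sum_congr rfl fun p _ => hpart p
    _ = ∑ u, ∑ v ∈ part σ (σ u), modularityWeight G u v :=
        sum_fiberwise_of_maps_to (fun u _ => mem_image_of_mem σ (mem_univ u)) _
    _ = _ := by simp only [part, sum_filter, eq_comm]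

lemma snapTerm_le (G : SimpleGraph V) (σ : V → P) : snapTerm G σ ≤ 2 * numEdges G := by
  rw [snapTerm_eq_sum_modularityWeight, ← twoE_univ, twoE]
  gcongr with u _ v _
  have : 0 ≤ deg G u * deg G v / (2 * numEdges G) := by
    have := deg_nonneg G u; have := deg_nonneg G v; have := numEdges_nonneg G; positivity
  unfold modularityWeight
  split_ifs <;> linarith

lemma snapTerm_comp_of_injOn (G : SimpleGraph V) (σ : V → P) {f : P → Q}
    (hf : Set.InjOn f (Set.range σ)) : snapTerm G (fun v => f (σ v)) = snapTerm G σ := by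
  simp only [snapTerm_eq_sum_modularityWeight,
    hf.eq_iff (Set.mem_range_self _) (Set.mem_range_self _)]

end

section

variable {α β : Type*} [Fintype α] [Fintype β] [Nonempty β]

lemma sum_ite_apply_eq_apply (a b : α) (x : ℝ) :
    ∑ g : α → β, (if g a = g b then x else 0) =
      Fintype.card (α → β) *
        ((1 - 1 / Fintype.card β) * (if a = b then x else 0) + x / Fintype.card β) := by
  have hβ : (Fintype.card β : ℝ) ≠ 0 := Nat.cast_ne_zero.2 Fintype.card_ne_zero
  rcases eq_or_ne a b with rfl | hab
  · simp only [if_true, sum_const, card_univ, nsmul_eq_mul]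
    field_simp
    ring
  · have hcard := Fintype.card_congr (Equiv.funSplitAt b β)
    rw [Fintype.card_prod] at hcard
    rw [if_neg hab, hcard, Fintype.sum_equiv (Equiv.funSplitAt b β)
      (fun g => if g a = g b then x else 0) (fun y => if y.2 ⟨a, hab⟩ = y.1 then x else 0)
      fun g => rfl, Fintype.sum_prod_type, sum_comm]
    simp only [sum_ite_eq, mem_univ, if_true, sum_const, card_univ, nsmul_eq_mul]
    push_cast
    field_simp
    ring

end

section

variable {V : Type*} [Fintype V] {P Q β : Type*} [Fintype β] [Nonempty β]

lemma sum_snapTerm_comp [Fintype P] (G : SimpleGraph V) (σ : V → P) :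
    ∑ g : P → β, snapTerm G (fun v => g (σ v)) =
      Fintype.card (P → β) * ((1 - 1 / Fintype.card β) * snapTerm G σ) := by
  simp only [snapTerm_eq_sum_modularityWeight]
  rw [sum_comm]
  refine (sum_congr rfl fun u _ => sum_comm).trans ?_
  simp only [sum_ite_apply_eq_apply, ← mul_sum, sum_add_distrib, ← sum_div,
    sum_modularityWeight, zero_div, add_zero]

lemma sum_loyalty_comp [Fintype P] {T : ℕ} (hT : 1 ≤ T) (π : V → ℕ → P) :
    ∑ g : P → β, loyalty T (fun v t => g (π v t)) =
      Fintype.card (P → β) * ((1 - 1 / Fintype.card β) * loyalty T π +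
        Fintype.card V * ((T : ℝ) - 1) / Fintype.card β) := by
  have hcard : (#(Icc 1 (T - 1)) : ℝ) = T - 1 := by
    rw [Nat.card_Icc, Nat.add_sub_cancel, Nat.cast_sub hT, Nat.cast_one]
  simp only [loyalty]
  rw [sum_comm]
  refine (sum_congr rfl fun v _ => sum_comm).trans ?_
  simp only [sum_ite_apply_eq_apply, ← mul_sum, sum_add_distrib, sum_const, card_univ,
    nsmul_eq_mul, hcard]
  ring

lemma qTilde_eq (G : ℕ → SimpleGraph V) (T : ℕ) (ω : ℝ) (π : V → ℕ → P) :
    qTilde G T ω π = ∑ t ∈ Icc 1 T, snapTerm (G t) (fun v => π v t) + ω * loyalty T π :=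
  rfl

lemma sum_qTilde_comp [Fintype P] (G : ℕ → SimpleGraph V) {T : ℕ} (hT : 1 ≤ T) (ω : ℝ)
    (π : V → ℕ → P) :
    ∑ g : P → β, qTilde G T ω (fun v t => g (π v t)) =
      Fintype.card (P → β) * ((1 - 1 / Fintype.card β) * qTilde G T ω π +
        ω * Fintype.card V * ((T : ℝ) - 1) / Fintype.card β) := by
  simp only [qTilde_eq, sum_add_distrib, ← mul_sum]
  rw [sum_comm, sum_congr rfl fun t _ => sum_snapTerm_comp (G t) _, ← mul_sum, ← mul_sum,
    sum_loyalty_comp hT]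
  ring

lemma exists_qTilde_comp_ge [Fintype P] (G : ℕ → SimpleGraph V) {T : ℕ} (hT : 1 ≤ T) (ω : ℝ)
    (π : V → ℕ → P) :
    ∃ g : P → β, (1 - 1 / Fintype.card β) * qTilde G T ω π +
        ω * Fintype.card V * ((T : ℝ) - 1) / Fintype.card β ≤
      qTilde G T ω (fun v t => g (π v t)) := by
  obtain ⟨g, -, hg⟩ := exists_le_of_sum_le univ_nonempty (f := fun _ : P → β =>
      (1 - 1 / Fintype.card β) * qTilde G T ω π +
        ω * Fintype.card V * ((T : ℝ) - 1) / Fintype.card β)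
    (g := fun g => qTilde G T ω fun v t => g (π v t))
    (by rw [sum_const, card_univ, nsmul_eq_mul, sum_qTilde_comp G hT])
  exact ⟨g, hg⟩

noncomputable def labels (T : ℕ) (π : V → ℕ → P) : Finset P :=
  (univ ×ˢ Icc 1 T).image fun x => π x.1 x.2

lemma mem_labels {T t : ℕ} (π : V → ℕ → P) (v : V) (ht : t ∈ Icc 1 T) : π v t ∈ labels T π :=
  mem_image.2 ⟨(v, t), mem_product.2 ⟨mem_univ v, ht⟩, rfl⟩

lemma qTilde_comp_of_injOn (G : ℕ → SimpleGraph V) (T : ℕ) (ω : ℝ) (π : V → ℕ → P)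
    {f : P → Q} (hf : Set.InjOn f (labels T π)) :
    qTilde G T ω (fun v t => f (π v t)) = qTilde G T ω π := by
  have hf' {u v : V} {s t : ℕ} (hs : s ∈ Icc 1 T) (ht : t ∈ Icc 1 T) :
      f (π u s) = f (π v t) ↔ π u s = π v t :=
    hf.eq_iff (mem_labels π u hs) (mem_labels π v ht)
  rw [qTilde_eq, qTilde_eq, loyalty, loyalty]
  congr 1
  · refine sum_congr rfl fun t ht => snapTerm_comp_of_injOn _ _ ?_
    rintro _ ⟨u, rfl⟩ _ ⟨v, rfl⟩
    exact (hf' ht ht).1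
  · refine congrArg _ (sum_congr rfl fun v _ => sum_congr rfl fun t ht => ?_)
    rw [mem_Icc] at ht
    simp only [hf' (t := t + 1) (mem_Icc.2 ⟨ht.1, by omega⟩) (mem_Icc.2 ⟨by omega, by omega⟩)]

lemma exists_qTilde_ge_of_recolouring (G : ℕ → SimpleGraph V) {T : ℕ} (hT : 1 ≤ T) (ω : ℝ)
    (π : V → ℕ → P) :
    ∃ π' : V → ℕ → β, (1 - 1 / Fintype.card β) * qTilde G T ω π +
        ω * Fintype.card V * ((T : ℝ) - 1) / Fintype.card β ≤ qTilde G T ω π' := by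
  -- Only finitely many labels occur up to time `T`; move them injectively into a finite type.
  let f (p : P) : Option (labels T π) := if h : p ∈ labels T π then some ⟨p, h⟩ else none
  have hf : Set.InjOn f (labels T π) := fun p hp q hq hpq => by
    simpa [f, dif_pos (mem_coe.1 hp), dif_pos (mem_coe.1 hq)] using hpq
  obtain ⟨g, hg⟩ := exists_qTilde_comp_ge (β := β) G hT ω fun v t => f (π v t)
  rw [qTilde_comp_of_injOn G T ω π hf] at hg
  exact ⟨_, hg⟩

lemma loyalty_le (T : ℕ) (π : V → ℕ → P) :
    loyalty T π ≤ Fintype.card V * #(Icc 1 (T - 1)) := by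
  calc loyalty T π ≤ ∑ _v : V, ∑ _t ∈ Icc 1 (T - 1), (1 : ℝ) := by
        unfold loyalty
        gcongr
        split_ifs <;> norm_num
    _ = Fintype.card V * #(Icc 1 (T - 1)) := by simp

lemma qTilde_le (G : ℕ → SimpleGraph V) (T : ℕ) {ω : ℝ} (hω : 0 ≤ ω) (π : V → ℕ → P) :
    qTilde G T ω π ≤
      ∑ t ∈ Icc 1 T, 2 * numEdges (G t) + ω * (Fintype.card V * #(Icc 1 (T - 1))) :=
  add_le_add (sum_le_sum fun _ _ => snapTerm_le _ _) (mul_le_mul_of_nonneg_left (loyalty_le T π) hω)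

lemma mu_nonneg (G : ℕ → SimpleGraph V) {T : ℕ} (hT : 1 ≤ T) {ω : ℝ} (hω : 0 ≤ ω) :
    0 ≤ mu G T ω := by
  have hT' : (0 : ℝ) ≤ T - 1 := sub_nonneg.2 (Nat.one_le_cast.2 hT)
  have := sum_nonneg fun t (_ : t ∈ Icc 1 T) => numEdges_nonneg (G t)
  unfold mu
  positivity

lemma bddAbove_range_qTemp (G : ℕ → SimpleGraph V) {T : ℕ} (hT : 1 ≤ T) {ω : ℝ} (hω : 0 ≤ ω) :
    BddAbove (Set.range fun π : V → ℕ → P => qTemp G T ω π) :=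
  ⟨_, Set.forall_mem_range.2 fun π =>
    div_le_div_of_nonneg_right (qTilde_le G T hω π) (by linarith [mu_nonneg G hT hω])⟩

end

theorem temporal_k_modularity_bound_general {V : Type*} [Fintype V]
    (T : ℕ) (hT : 1 ≤ T) (G : ℕ → SimpleGraph V)
    (ω : ℝ) (hω : 0 ≤ ω) (k : ℕ) (hk : 2 ≤ k) :
    (1 - 1 / (k : ℝ)) * qTempStar G T ω +
        (Fintype.card V : ℝ) * ω * ((T : ℝ) - 1) / (2 * (k : ℝ) * mu G T ω) ≤
      qTempStarK G T ω k := by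
  have hμ := mu_nonneg G hT hω
  have hk' : (0 : ℝ) ≤ 1 - 1 / k := by
    rw [sub_nonneg, div_le_one (by positivity)]
    exact_mod_cast (by omega : 1 ≤ k)
  have : Nonempty (Fin k) := ⟨⟨0, by omega⟩⟩
  rw [qTempStar, Real.mul_iSup_of_nonneg hk', ← le_sub_iff_add_le]
  refine ciSup_le fun π => le_sub_iff_add_le.2 ?_
  obtain ⟨π', hπ'⟩ := exists_qTilde_ge_of_recolouring (β := Fin k) G hT ω π
  rw [Fintype.card_fin] at hπ'
  calc (1 - 1 / (k : ℝ)) * qTemp G T ω π +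
        (Fintype.card V : ℝ) * ω * ((T : ℝ) - 1) / (2 * (k : ℝ) * mu G T ω)
      = ((1 - 1 / (k : ℝ)) * qTilde G T ω π +
          ω * Fintype.card V * ((T : ℝ) - 1) / k) / (2 * mu G T ω) := by
        rw [qTemp]; ring
    _ ≤ qTemp G T ω π' := div_le_div_of_nonneg_right hπ' (by linarith)
    _ ≤ qTempStarK G T ω k := le_ciSup (bddAbove_range_qTemp G hT hω) π'

/-- For any temporal graph `𝒢` with `n` vertices and lifetime `T` in
which each snapshot has at least one edge, any `ω ≥ 0` and any integer `k ≥ 2`, the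
temporal `k`-modularity satisfies
`q*_{k,ω}(𝒢) ≥ (1 − 1/k)·q*_ω(𝒢) + n ω (T−1)/(2 k μ_ω(𝒢))`. -/
theorem temporal_k_modularity_bound {V : Type*} [Fintype V]
    (T : ℕ) (hT : 1 ≤ T) (G : ℕ → SimpleGraph V)
    (hE : ∀ t ∈ Icc 1 T, (G t).edgeSet.Nonempty)
    (ω : ℝ) (hω : 0 ≤ ω) (k : ℕ) (hk : 2 ≤ k) :
    (1 - 1 / (k : ℝ)) * qTempStar G T ω +
        (Fintype.card V : ℝ) * ω * ((T : ℝ) - 1) / (2 * (k : ℝ) * mu G T ω) ≤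
      qTempStarK G T ω k :=
  temporal_k_modularity_bound_general T hT G ω hω k hk

end TemporalModularity
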